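/- Fix μ > 1 and define δ(T) = (2μ/(μ²+1))·log(((μ²+1)(e^T - 1) + 2)/2) - T for 0 < T ≤ log((μ²+1)/(μ²-1)), and δ(T) = log( (μ-1)(sqrt(e^T+1) + sqrt(e^T-1)) / ((μ+1)(sqrt(e^T+1) - sqrt(e^T-1))) ) + (2μ/(μ²+1))·log(2μ²/(μ²-1)) - T for T ≥ log((μ²+1)/(μ²-1)). Then δ is continuous and strictly increasing on (0, ∞). -/

import Mathlib

/-!
Let `T₀ = log ((μ² + 1) / (μ² - 1))`. On `[0, T₀]`, `δ` is given by the first formula, whose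
derivative `(μ - 1) (μ + 1 - (μ - 1) eᵀ) / ((μ² + 1) (eᵀ - 1) + 2)` is positive as long as
`eᵀ < (μ + 1) / (μ - 1)`, in particular up to `T₀`. On `[T₀, ∞)` the identity
`(√(u + 1) + √(u - 1)) / (√(u + 1) - √(u - 1)) = u (1 + √(1 - u⁻²))` with `u = eᵀ` turns the second
formula into `log ((μ - 1) / (μ + 1)) + log (1 + √(1 - e⁻²ᵀ)) + const`, which is visibly continuous
and strictly increasing. The two formulas agree at `T₀`, so the two pieces glue along the closed
sets `[0, T₀]` and `[T₀, ∞)`.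
-/

noncomputable def deltaFun (μ T : ℝ) : ℝ :=
  if T ≤ Real.log ((μ ^ 2 + 1) / (μ ^ 2 - 1)) then
    (2 * μ / (μ ^ 2 + 1)) *
        Real.log (((μ ^ 2 + 1) * (Real.exp T - 1) + 2) / 2) - T
  else
    Real.log ((μ - 1) * (Real.sqrt (Real.exp T + 1) + Real.sqrt (Real.exp T - 1)) /
        ((μ + 1) * (Real.sqrt (Real.exp T + 1) - Real.sqrt (Real.exp T - 1)))) +
      (2 * μ / (μ ^ 2 + 1)) * Real.log (2 * μ ^ 2 / (μ ^ 2 - 1)) - T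

open Real Set

lemma sqrt_add_div_sqrt_sub {u : ℝ} (hu : 1 ≤ u) :
    (√(u + 1) + √(u - 1)) / (√(u + 1) - √(u - 1)) = u * (1 + √(1 - (u ^ 2)⁻¹)) := by
  have hA : √(u + 1) ^ 2 = u + 1 := sq_sqrt (by linarith)
  have hB : √(u - 1) ^ 2 = u - 1 := sq_sqrt (by linarith)
  have hBA : √(u - 1) < √(u + 1) := sqrt_lt_sqrt (by linarith) (by linarith)
  have hprod : u * √(1 - (u ^ 2)⁻¹) = √(u + 1) * √(u - 1) := by
    have hu0 : u ≠ 0 := by positivity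
    rw [← sqrt_mul (by linarith), show (u + 1) * (u - 1) = u ^ 2 * (1 - (u ^ 2)⁻¹) by
      field_simp; ring, sqrt_mul (sq_nonneg u), sqrt_sq (by linarith)]
  rw [div_eq_iff (sub_ne_zero.2 hBA.ne'), mul_add, mul_one, hprod]
  linear_combination (-√(u - 1)) * hA + √(u + 1) * hB

noncomputable def deltaThreshold (μ : ℝ) : ℝ := log ((μ ^ 2 + 1) / (μ ^ 2 - 1))

noncomputable def deltaSmall (μ T : ℝ) : ℝ :=
  (2 * μ / (μ ^ 2 + 1)) * log (((μ ^ 2 + 1) * (exp T - 1) + 2) / 2) - T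

noncomputable def deltaLarge (μ T : ℝ) : ℝ :=
  log ((μ - 1) / (μ + 1)) + log (1 + √(1 - exp (-(2 * T)))) +
    (2 * μ / (μ ^ 2 + 1)) * log (2 * μ ^ 2 / (μ ^ 2 - 1))

variable {μ : ℝ}

lemma exp_deltaThreshold (hμ : 1 < μ) : exp (deltaThreshold μ) = (μ ^ 2 + 1) / (μ ^ 2 - 1) :=
  exp_log (div_pos (by positivity) (by nlinarith))

lemma deltaThreshold_pos (hμ : 1 < μ) : 0 < deltaThreshold μ :=
  log_pos <| (one_lt_div (by nlinarith)).2 (by linarith)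

lemma eqOn_deltaFun_deltaSmall : EqOn (deltaFun μ) (deltaSmall μ) (Iic (deltaThreshold μ)) :=
  fun _ hT ↦ if_pos hT

lemma deltaFun_eq_deltaLarge (hμ : 1 < μ) {T : ℝ} (hT : deltaThreshold μ < T) :
    deltaFun μ T = deltaLarge μ T := by
  have hexp : 1 ≤ exp T := one_le_exp ((deltaThreshold_pos hμ).trans hT).le
  have hinv : (exp T ^ 2)⁻¹ = exp (-(2 * T)) := by
    rw [← exp_nat_mul, ← exp_neg]
    norm_num
  rw [deltaFun, ← deltaThreshold, if_neg hT.not_ge, mul_div_mul_comm,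
    sqrt_add_div_sqrt_sub hexp, hinv, log_mul (div_pos (by linarith) (by linarith)).ne'
    (by positivity), log_mul (by positivity) (by positivity), log_exp, deltaLarge]
  ring

lemma deltaSmall_deltaThreshold (hμ : 1 < μ) :
    deltaSmall μ (deltaThreshold μ) = deltaLarge μ (deltaThreshold μ) := by
  have hμ1 : 0 < μ ^ 2 - 1 := by nlinarith
  have hexp2 : exp (-(2 * deltaThreshold μ)) = ((μ ^ 2 - 1) / (μ ^ 2 + 1)) ^ 2 := by
    rw [show -(2 * deltaThreshold μ) = -deltaThreshold μ + -deltaThreshold μ by ring, exp_add,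
      exp_neg, exp_deltaThreshold hμ, inv_div, ← sq]
  have hsqrt : √(1 - exp (-(2 * deltaThreshold μ))) = 2 * μ / (μ ^ 2 + 1) := by
    rw [hexp2, show 1 - ((μ ^ 2 - 1) / (μ ^ 2 + 1)) ^ 2 = (2 * μ / (μ ^ 2 + 1)) ^ 2 by
      field_simp; ring, sqrt_sq (by positivity)]
  have hsmall : ((μ ^ 2 + 1) * ((μ ^ 2 + 1) / (μ ^ 2 - 1) - 1) + 2) / 2
      = 2 * μ ^ 2 / (μ ^ 2 - 1) := by
    field_simp; ring
  have hlarge :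
      (μ - 1) / (μ + 1) * (1 + 2 * μ / (μ ^ 2 + 1)) = ((μ ^ 2 + 1) / (μ ^ 2 - 1))⁻¹ := by
    field_simp; ring
  rw [deltaSmall, deltaLarge, exp_deltaThreshold hμ, hsmall, hsqrt,
    ← log_mul (div_pos (by linarith) (by linarith)).ne' (by positivity), hlarge, log_inv,
    deltaThreshold]
  ring

lemma eqOn_deltaFun_deltaLarge (hμ : 1 < μ) :
    EqOn (deltaFun μ) (deltaLarge μ) (Ici (deltaThreshold μ)) := by
  intro T hT
  rcases (mem_Ici.1 hT).eq_or_lt with rfl | hlt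
  · rw [eqOn_deltaFun_deltaSmall self_mem_Iic, deltaSmall_deltaThreshold hμ]
  · exact deltaFun_eq_deltaLarge hμ hlt

lemma hasDerivAt_deltaSmall (μ : ℝ) {T : ℝ} (hT : 0 ≤ T) :
    HasDerivAt (deltaSmall μ)
      ((μ - 1) * (μ + 1 - (μ - 1) * exp T) / ((μ ^ 2 + 1) * (exp T - 1) + 2)) T := by
  have hD : 0 < (μ ^ 2 + 1) * (exp T - 1) + 2 := by nlinarith [one_le_exp hT, sq_nonneg μ]
  have harg := ((((hasDerivAt_exp T).sub_const 1).const_mul (μ ^ 2 + 1)).add_const 2).div_const 2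
  refine ((harg.log (by positivity)).const_mul _ |>.sub (hasDerivAt_id T)).congr_deriv ?_
  field_simp
  ring

lemma continuousOn_deltaSmall : ContinuousOn (deltaSmall μ) (Ici 0) :=
  fun _ hT ↦ (hasDerivAt_deltaSmall μ hT).continuousAt.continuousWithinAt

lemma strictMonoOn_deltaSmall (hμ : 1 < μ) :
    StrictMonoOn (deltaSmall μ) (Icc 0 (deltaThreshold μ)) := by
  refine strictMonoOn_of_deriv_pos (convex_Icc _ _)
    (continuousOn_deltaSmall.mono Icc_subset_Ici_self) fun T hT ↦ ?_
  rw [interior_Icc] at hT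
  rw [(hasDerivAt_deltaSmall μ hT.1.le).deriv]
  have hexp : exp T * (μ ^ 2 - 1) < μ ^ 2 + 1 := by
    rw [← lt_div_iff₀ (by nlinarith), ← exp_deltaThreshold hμ]
    exact exp_lt_exp.2 hT.2
  have hnum : 0 < μ + 1 - (μ - 1) * exp T := by nlinarith
  exact div_pos (mul_pos (by linarith) hnum) (by nlinarith [one_lt_exp_iff.2 hT.1, sq_nonneg μ])

lemma continuous_deltaLarge (μ : ℝ) : Continuous (deltaLarge μ) := by
  unfold deltaLarge
  fun_prop (disch := intros; positivity)

lemma strictMonoOn_deltaLarge (μ : ℝ) : StrictMonoOn (deltaLarge μ) (Ici 0) := by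
  intro s hs t _ hst
  have hexp : exp (-(2 * s)) ≤ 1 := exp_le_one_iff.2 (by linarith [mem_Ici.1 hs])
  unfold deltaLarge
  gcongr

lemma continuousOn_deltaFun (hμ : 1 < μ) : ContinuousOn (deltaFun μ) (Ici 0) := by
  rw [← Icc_union_Ici_eq_Ici (deltaThreshold_pos hμ).le]
  refine ContinuousOn.union_of_isClosed ?_ ?_ isClosed_Icc isClosed_Ici
  · exact (continuousOn_deltaSmall.mono Icc_subset_Ici_self).congr
      (eqOn_deltaFun_deltaSmall.mono Icc_subset_Iic_self)
  · exact (continuous_deltaLarge μ).continuousOn.congr (eqOn_deltaFun_deltaLarge hμ)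

lemma strictMonoOn_deltaFun (hμ : 1 < μ) : StrictMonoOn (deltaFun μ) (Ici 0) := by
  have hT₀ := (deltaThreshold_pos hμ).le
  rw [← Icc_union_Ici_eq_Ici hT₀]
  refine StrictMonoOn.union ?_ ?_ (isGreatest_Icc hT₀) isLeast_Ici
  · exact (strictMonoOn_deltaSmall hμ).congr
      (eqOn_deltaFun_deltaSmall.mono Icc_subset_Iic_self).symm
  · exact ((strictMonoOn_deltaLarge μ).mono (Ici_subset_Ici.2 hT₀)).congr
      (eqOn_deltaFun_deltaLarge hμ).symm

theorem stmt11 (μ : ℝ) (hμ : 1 < μ) :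
    ContinuousOn (deltaFun μ) (Set.Ioi 0) ∧
      StrictMonoOn (deltaFun μ) (Set.Ioi 0) :=
  ⟨(continuousOn_deltaFun hμ).mono Ioi_subset_Ici_self,
    (strictMonoOn_deltaFun hμ).mono Ioi_subset_Ici_self⟩
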